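/- arXiv:1907.10017 — 3 statements merged into one kernel-verified Lean document; each statement's English description precedes it below -/
import Mathlib

section
/- Let T be a commutative K-algebra, g ∈ T, and I an ideal of T. If δ is a K-linear differential operator on T that preserves I (δ(I) ⊆ I), then the unique extension δ_g of δ to the localization T_g preserves the extended ideal I·T_g. -/
/-- Grothendieck-style differential operators on a commutative ring, defined
inductively via commutators with multiplication operators. -/
def IsDiffOp (T : Type*) [CommRing T] : ℕ → (T → T) → Prop
  | 0, δ => ∃ a : T, ∀ x, δ x = a * x
  | m + 1, δ => (∀ x y, δ (x + y) = δ x + δ y) ∧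
      ∀ s : T, IsDiffOp T m (fun x => δ (s * x) - s * δ x)

/-!
Induction on the order of the operator `ε` on the localization. An element `z` of `I·S` satisfies
`z * s = x` with `x ∈ I` and `s` invertible in `S`, and `s * ε z = ε x - [ε, s] z`. The commutator
`[ε, s]` has lower order and again maps `I` into `I·S`, so `s * ε z ∈ I·S`, hence `ε z ∈ I·S`.
-/

theorem IsDiffOp.mem_map_of_forall_algebraMap_mem {R S : Type*} [CommRing R] [CommRing S]
    [Algebra R S] (M : Submonoid R) [IsLocalization M S] {I : Ideal R} {m : ℕ} {ε : S → S}
    (hε : IsDiffOp S m ε) (hI : ∀ x ∈ I, ε (algebraMap R S x) ∈ I.map (algebraMap R S)) :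
    ∀ z ∈ I.map (algebraMap R S), ε z ∈ I.map (algebraMap R S) := by
  induction m generalizing ε with
  | zero =>
    obtain ⟨a, ha⟩ := hε
    intro z hz
    rw [ha]
    exact Ideal.mul_mem_left _ a hz
  | succ m ih =>
    intro z hz
    obtain ⟨⟨x, s⟩, hzs⟩ := (IsLocalization.mem_map_algebraMap_iff M S).mp hz
    set t := algebraMap R S s
    have hcomm_I : ∀ y ∈ I, ε (t * algebraMap R S y) - t * ε (algebraMap R S y)
        ∈ I.map (algebraMap R S) := by
      intro y hy
      rw [← map_mul]
      exact sub_mem (hI _ (I.mul_mem_left _ hy)) (Ideal.mul_mem_left _ _ (hI y hy))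
    have hcomm_z : ε (t * z) - t * ε z ∈ I.map (algebraMap R S) :=
      ih (hε.2 t) hcomm_I z hz
    have htz : ε (t * z) ∈ I.map (algebraMap R S) := by
      rw [mul_comm, hzs]
      exact hI x x.2
    have hteps : t * ε z ∈ I.map (algebraMap R S) := by
      simpa using sub_mem htz hcomm_z
    exact (Ideal.unit_mul_mem_iff_mem _ (IsLocalization.map_units S s)).mp hteps

theorem diffOp_localization_preserves_ideal_general
    {T : Type*} [CommRing T]
    (g : T) (I : Ideal T) (δ : T → T)
    (hI : ∀ x ∈ I, δ x ∈ I)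
    (δg : Localization.Away g → Localization.Away g)
    (hδg : ∃ m, IsDiffOp (Localization.Away g) m δg)
    (hext : ∀ x : T, δg (algebraMap T (Localization.Away g) x)
        = algebraMap T (Localization.Away g) (δ x)) :
    ∀ y ∈ I.map (algebraMap T (Localization.Away g)),
      δg y ∈ I.map (algebraMap T (Localization.Away g)) := by
  obtain ⟨m, hm⟩ := hδg
  refine hm.mem_map_of_forall_algebraMap_mem (Submonoid.powers g) fun x hx => ?_
  rw [hext]
  exact Ideal.mem_map_of_mem _ (hI x hx)

/-- **Lemma (log-preserving operators localize).**  Let `T` be a commutative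
`K`-algebra, `g ∈ T`, and `I` an ideal of `T`.  If `δ` is a `K`-linear differential
operator on `T` preserving `I` (i.e. `δ(I) ⊆ I`), then its extension `δ_g` to the
localization `T_g` preserves the extended ideal `I·T_g`. -/
theorem diffOp_localization_preserves_ideal
    {K : Type*} [Field K] {T : Type*} [CommRing T] [Algebra K T]
    (g : T) (I : Ideal T) {n : ℕ} (δ : T → T)
    (hδ : IsDiffOp T n δ)
    (hlin : ∀ (c : K) (x : T), δ (algebraMap K T c * x) = algebraMap K T c * δ x)
    (hI : ∀ x ∈ I, δ x ∈ I)
    (δg : Localization.Away g → Localization.Away g)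
    (hδg : ∃ m, IsDiffOp (Localization.Away g) m δg)
    (hext : ∀ x : T, δg (algebraMap T (Localization.Away g) x)
        = algebraMap T (Localization.Away g) (δ x)) :
    ∀ y ∈ I.map (algebraMap T (Localization.Away g)),
      δg y ∈ I.map (algebraMap T (Localization.Away g)) :=
  diffOp_localization_preserves_ideal_general g I δ hI δg hδg hext
end

section
/- Let A ⊆ T be an inclusion of F-finite F-pure domains of prime characteristic p that is differentially extensible with respect to the level filtration (every A^{p^e}-linear endomorphism of A extends to a T^{p^e}-linear endomorphism of T). Then the inclusion is Cartier extensible: every p^{-e}-linear map ψ : A → A (i.e., additive with ψ(r^{p^e} a) = r ψ(a)) extends to a p^{-e}-linear map ψ̃ : T → T with ψ̃|_A = ψ. -/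
/-!
Given a `p^{-e}`-linear `ψ` on `A`, the composite `a ↦ ψ(a)^{p^e}` is `A^{p^e}`-linear, so it
extends to a `T^{p^e}`-linear `φ'` on `T`. Following `φ'` by an `F`-splitting `π` of `T` gives a
`p^{-e}`-linear map on `T`, and on `A` it is `π(ψ(a)^{p^e}) = ψ(a)`.
-/

section CartierMaps

variable {R : Type*} [CommRing R]

/-- `ψ` is `p^{-e}`-linear when `q = p^e`. -/
def IsCartierLinear (q : ℕ) (ψ : R →+ R) : Prop :=
  ∀ r x : R, ψ (r ^ q * x) = r * ψ x

def IsLevelLinear (q : ℕ) (φ : R →+ R) : Prop :=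
  ∀ r x : R, φ (r ^ q * x) = r ^ q * φ x

theorem IsCartierLinear.comp_isLevelLinear {q : ℕ} {π φ : R →+ R}
    (hπ : IsCartierLinear q π) (hφ : IsLevelLinear q φ) : IsCartierLinear q (π.comp φ) :=
  fun r x => by rw [AddMonoidHom.comp_apply, hφ, hπ, AddMonoidHom.comp_apply]

theorem IsCartierLinear.isLevelLinear_iterateFrobenius_comp {p e : ℕ} [ExpChar R p]
    {ψ : R →+ R} (hψ : IsCartierLinear (p ^ e) ψ) :
    IsLevelLinear (p ^ e) ((iterateFrobenius R p e).toAddMonoidHom.comp ψ) :=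
  fun r x => by
    simp only [AddMonoidHom.comp_apply, RingHom.toAddMonoidHom_eq_coe, AddMonoidHom.coe_coe,
      iterateFrobenius_def]
    rw [hψ, mul_pow]

/-- At level `0` the identity is an `F`-splitting. -/
theorem exists_frobeniusSplitting {p : ℕ}
    (h : ∀ e : ℕ, 0 < e → ∃ π : R →+ R,
      IsCartierLinear (p ^ e) π ∧ ∀ t : R, π (t ^ p ^ e) = t) (e : ℕ) :
    ∃ π : R →+ R, IsCartierLinear (p ^ e) π ∧ ∀ t : R, π (t ^ p ^ e) = t := by
  rcases Nat.eq_zero_or_pos e with rfl | he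
  · exact ⟨AddMonoidHom.id R, fun r x => by simp, fun t => by simp⟩
  · exact h e he

end CartierMaps

theorem cartierExtensible_of_levelDifferentiallyExtensible_general
    {p : ℕ} (hp : p.Prime) {T : Type*} [CommRing T] [CharP T p]
    (A : Subring T)
    -- `T` is `F`-pure: the inclusion `T → F^e_* T` splits `T`-linearly.
    (hFPT : ∀ e : ℕ, 0 < e → ∃ π : T →+ T,
        (∀ r t : T, π (r ^ p ^ e * t) = r * π t) ∧ ∀ t : T, π (t ^ p ^ e) = t)
    -- the inclusion `A ⊆ T` is level-differentially extensible.
    (hLDE : ∀ (e : ℕ) (φ : A →+ A),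
        (∀ r x : A, φ (r ^ p ^ e * x) = r ^ p ^ e * φ x) →
        ∃ φ' : T →+ T, (∀ r x : T, φ' (r ^ p ^ e * x) = r ^ p ^ e * φ' x) ∧
          ∀ a : A, φ' ↑a = ↑(φ a)) :
    -- then the inclusion `A ⊆ T` is Cartier extensible.
    ∀ (e : ℕ) (ψ : A →+ A),
      (∀ r x : A, ψ (r ^ p ^ e * x) = r * ψ x) →
      ∃ ψ' : T →+ T, (∀ r x : T, ψ' (r ^ p ^ e * x) = r * ψ' x) ∧
        ∀ a : A, ψ' ↑a = ↑(ψ a) := by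
  intro e ψ hψ
  have : Fact p.Prime := ⟨hp⟩
  have : CharP A p := CharP.subring T p A
  obtain ⟨φ', hφ', hφ'_ext⟩ :=
    hLDE e _ (IsCartierLinear.isLevelLinear_iterateFrobenius_comp (ψ := ψ) hψ)
  obtain ⟨π, hπ, hπ_frob⟩ := exists_frobeniusSplitting hFPT e
  refine ⟨π.comp φ', hπ.comp_isLevelLinear hφ', fun a => ?_⟩
  calc π (φ' a) = π ((ψ a : T) ^ p ^ e) := by simp [hφ'_ext, iterateFrobenius_def]
    _ = ψ a := hπ_frob _

/-- **Lemma (level-differential extensibility implies Cartier extensibility).**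
Let `A ⊆ T` be an inclusion of `F`-finite `F`-pure domains of prime characteristic
`p` that is differentially extensible with respect to the level filtration, i.e.
every `A^{p^e}`-linear endomorphism of `A` extends to a `T^{p^e}`-linear endomorphism
of `T`.  Then the inclusion is Cartier extensible: every `p^{-e}`-linear map
`ψ : A → A` (additive with `ψ(r^{p^e}·a) = r·ψ(a)`) extends to a `p^{-e}`-linear map
`ψ̃ : T → T` with `ψ̃|_A = ψ`. -/
theorem cartierExtensible_of_levelDifferentiallyExtensible
    {p : ℕ} (hp : p.Prime) {T : Type*} [CommRing T] [IsDomain T] [CharP T p]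
    (A : Subring T)
    -- `T` is `F`-finite: `T` is a finitely generated module over its subring of
    -- `p^e`-th powers, for every `e`.
    (hFFT : ∀ e : ℕ, ∃ s : Finset T, ∀ t : T, ∃ c : T → T,
        t = ∑ x ∈ s, c x ^ p ^ e * x)
    -- `A` is `F`-finite.
    (hFFA : ∀ e : ℕ, ∃ s : Finset A, ∀ t : A, ∃ c : A → A,
        t = ∑ x ∈ s, c x ^ p ^ e * x)
    -- `T` is `F`-pure: the inclusion `T → F^e_* T` splits `T`-linearly.
    (hFPT : ∀ e : ℕ, 0 < e → ∃ π : T →+ T,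
        (∀ r t : T, π (r ^ p ^ e * t) = r * π t) ∧ ∀ t : T, π (t ^ p ^ e) = t)
    -- `A` is `F`-pure.
    (hFPA : ∀ e : ℕ, 0 < e → ∃ π : A →+ A,
        (∀ r t : A, π (r ^ p ^ e * t) = r * π t) ∧ ∀ t : A, π (t ^ p ^ e) = t)
    -- the inclusion `A ⊆ T` is level-differentially extensible.
    (hLDE : ∀ (e : ℕ) (φ : A →+ A),
        (∀ r x : A, φ (r ^ p ^ e * x) = r ^ p ^ e * φ x) →
        ∃ φ' : T →+ T, (∀ r x : T, φ' (r ^ p ^ e * x) = r ^ p ^ e * φ' x) ∧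
          ∀ a : A, φ' ↑a = ↑(φ a)) :
    -- then the inclusion `A ⊆ T` is Cartier extensible.
    ∀ (e : ℕ) (ψ : A →+ A),
      (∀ r x : A, ψ (r ^ p ^ e * x) = r * ψ x) →
      ∃ ψ' : T →+ T, (∀ r x : T, ψ' (r ^ p ^ e * x) = r * ψ' x) ∧
        ∀ a : A, ψ' ↑a = ↑(ψ a) :=
  cartierExtensible_of_levelDifferentiallyExtensible_general hp A hFPT hLDE
end

section
/- Let R be a regular F-finite domain of characteristic p > 0 and A ⊆ R a Cartier extensible direct summand (with A strongly F-regular). Then for every ideal I of A and every real λ ≥ 0, the test ideal satisfies τ_A(I^λ) = τ_R((IR)^λ) ∩ A, where τ_T(I^λ) = ⋃_{e>0} Σ_{ψ ∈ C^e_T} ψ(I^{⌈p^e λ⌉}). -/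
/-! Extending each Cartier map `ψ` on `A` to `ψ'` on `R` gives `τ_A(I^λ) ⊆ τ_R((IR)^λ)`.
Conversely, let `β : R → A` be an `A`-linear splitting. For a Cartier map `ψ'` on `R` and
`r ∈ R`, both `r · ψ'` and `ψ'(r · _)` are again Cartier maps, and `β ∘ ψ' ∘ (A → R)` is a
Cartier map on `A`; hence `β` sends `ψ'((I^n)R)` into `Σ_{ψ ∈ C^e_A} ψ(I^n)`, so it maps
`τ_R((IR)^λ)` into `τ_A(I^λ)`, and it fixes `A`. -/

/-- The test ideal `τ_T(I^λ) = ⋃_{e>0} Σ_{ψ ∈ C^e_T} ψ(I^{⌈p^e λ⌉})` of a (strongly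
`F`-regular) ring `T` of characteristic `p`, where `C^e_T` is the set of
`p^{-e}`-linear (Cartier) maps on `T`. -/
noncomputable def testIdeal (T : Type*) [CommRing T] (p : ℕ) (I : Ideal T)
    (lam : ℝ) : Ideal T :=
  ⨆ (e : ℕ) (_ : 0 < e),
    Ideal.span {y : T | ∃ ψ : T → T,
      (∀ a b : T, ψ (a + b) = ψ a + ψ b) ∧
      (∀ r x : T, ψ (r ^ p ^ e * x) = r * ψ x) ∧
      ∃ x ∈ I ^ (Nat.ceil ((p : ℝ) ^ e * lam)), y = ψ x}

section Cartier

variable {T : Type*} [CommRing T] (p e : ℕ)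

/-- `ψ ∈ C^e_T`. -/
def IsCartierMap (ψ : T → T) : Prop :=
  (∀ a b : T, ψ (a + b) = ψ a + ψ b) ∧ ∀ r x : T, ψ (r ^ p ^ e * x) = r * ψ x

/-- `⋃_{ψ ∈ C^e_T} ψ(J)`. -/
def cartierImage (J : Ideal T) : Set T :=
  {y | ∃ ψ : T → T, IsCartierMap p e ψ ∧ ∃ x ∈ J, y = ψ x}

variable {p e}

theorem IsCartierMap.map_zero {ψ : T → T} (hψ : IsCartierMap p e ψ) : ψ 0 = 0 := by
  simpa using hψ.1 0 0

theorem IsCartierMap.const_mul {ψ : T → T} (hψ : IsCartierMap p e ψ) (c : T) :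
    IsCartierMap p e (fun x => c * ψ x) :=
  ⟨fun a b => by dsimp only; rw [hψ.1, mul_add],
    fun r x => by dsimp only; rw [hψ.2, mul_left_comm]⟩

theorem IsCartierMap.comp_const_mul {ψ : T → T} (hψ : IsCartierMap p e ψ) (c : T) :
    IsCartierMap p e (fun x => ψ (c * x)) :=
  ⟨fun a b => by dsimp only; rw [mul_add, hψ.1],
    fun r x => by dsimp only; rw [mul_left_comm, hψ.2]⟩

theorem IsCartierMap.comp_algebraMap {A R : Type*} [CommRing A] [CommRing R] [Algebra A R]
    {ψ : R → R} (hψ : IsCartierMap p e ψ) (β : R →ₗ[A] A) :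
    IsCartierMap p e (fun a => β (ψ (algebraMap A R a))) :=
  ⟨fun a b => by dsimp only; rw [map_add, hψ.1, map_add], fun r x => by
    dsimp only
    rw [map_mul, map_pow, hψ.2, ← Algebra.smul_def, map_smul, smul_eq_mul]⟩

theorem testIdeal_eq_iSup (I : Ideal T) (lam : ℝ) :
    testIdeal T p I lam =
      ⨆ (e : ℕ) (_ : 0 < e), Ideal.span (cartierImage p e (I ^ ⌈(p : ℝ) ^ e * lam⌉₊)) := by
  simp only [testIdeal, cartierImage, IsCartierMap, and_assoc]

theorem span_cartierImage_le_testIdeal (I : Ideal T) (lam : ℝ) (he : 0 < e) :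
    Ideal.span (cartierImage p e (I ^ ⌈(p : ℝ) ^ e * lam⌉₊)) ≤ testIdeal T p I lam := by
  rw [testIdeal_eq_iSup]
  exact le_iSup₂_of_le (f := fun e (_ : 0 < e) => Ideal.span (cartierImage p e _)) e he le_rfl

end Cartier

section Summand

variable {p : ℕ} {A R : Type*} [CommRing A] [CommRing R] [Algebra A R]

theorem testIdeal_le_comap_of_cartierExtensible
    (hext : ∀ (e : ℕ) (ψ : A → A), IsCartierMap p e ψ →
      ∃ ψ' : R → R, IsCartierMap p e ψ' ∧
        ∀ a : A, ψ' (algebraMap A R a) = algebraMap A R (ψ a))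
    (I : Ideal A) (lam : ℝ) :
    testIdeal A p I lam ≤ (testIdeal R p (I.map (algebraMap A R)) lam).comap (algebraMap A R) := by
  rw [testIdeal_eq_iSup]
  refine iSup₂_le fun e he => Ideal.span_le.2 ?_
  rintro - ⟨ψ, hψ, x, hx, rfl⟩
  obtain ⟨ψ', hψ', hψ'ψ⟩ := hext e ψ hψ
  refine span_cartierImage_le_testIdeal _ _ he <|
    Ideal.subset_span ⟨ψ', hψ', _, ?_, (hψ'ψ x).symm⟩
  rw [← Ideal.map_pow]
  exact Ideal.mem_map_of_mem _ hx

theorem apply_cartierMap_mem_span_of_mem_map (β : R →ₗ[A] A) {e : ℕ} {J : Ideal A}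
    {x : R} (hx : x ∈ J.map (algebraMap A R)) {ψ : R → R} (hψ : IsCartierMap p e ψ) :
    β (ψ x) ∈ Ideal.span (cartierImage p e J) := by
  induction hx using Submodule.closure_induction generalizing ψ with
  | zero => rw [hψ.map_zero, map_zero]; exact zero_mem _
  | add x y _ _ hx hy => rw [hψ.1, map_add]; exact add_mem (hx hψ) (hy hψ)
  | smul_mem r _ hx =>
    obtain ⟨a, ha, rfl⟩ := hx
    exact Ideal.subset_span ⟨_, (hψ.comp_const_mul r).comp_algebraMap β, a, ha, rfl⟩

theorem apply_mem_span_cartierImage (β : R →ₗ[A] A) {e : ℕ} {J : Ideal A} {y : R}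
    (hy : y ∈ Ideal.span (cartierImage p e (J.map (algebraMap A R)))) :
    β y ∈ Ideal.span (cartierImage p e J) := by
  induction hy using Submodule.closure_induction with
  | zero => rw [map_zero]; exact zero_mem _
  | add x y _ _ hx hy => rw [map_add]; exact add_mem hx hy
  | smul_mem r _ hy =>
    obtain ⟨ψ, hψ, x, hx, rfl⟩ := hy
    exact apply_cartierMap_mem_span_of_mem_map β hx (hψ.const_mul r)

theorem apply_mem_testIdeal (β : R →ₗ[A] A) (I : Ideal A) (lam : ℝ) {y : R}
    (hy : y ∈ testIdeal R p (I.map (algebraMap A R)) lam) : β y ∈ testIdeal A p I lam := by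
  suffices (testIdeal R p (I.map (algebraMap A R)) lam).toAddSubmonoid ≤
      (testIdeal A p I lam).toAddSubmonoid.comap β.toAddMonoidHom from this hy
  simp only [testIdeal_eq_iSup (T := R), Submodule.iSup_toAddSubmonoid]
  refine iSup₂_le fun e he y hy => ?_
  rw [← Ideal.map_pow] at hy
  exact span_cartierImage_le_testIdeal I lam he (apply_mem_span_cartierImage β hy)

end Summand

theorem testIdeal_cartierExtensible_summand_general
    {p : ℕ}
    {A R : Type*} [CommRing A] [CommRing R]
    [Algebra A R]
    -- `A` is a direct summand of `R`
    (hsplit : ∃ β : R →ₗ[A] A, ∀ a : A, β (algebraMap A R a) = a)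
    -- the inclusion `A ⊆ R` is Cartier extensible
    (hCE : ∀ (e : ℕ) (ψ : A → A),
        (∀ a b : A, ψ (a + b) = ψ a + ψ b) →
        (∀ r x : A, ψ (r ^ p ^ e * x) = r * ψ x) →
        ∃ ψ' : R → R, (∀ a b : R, ψ' (a + b) = ψ' a + ψ' b) ∧
          (∀ r x : R, ψ' (r ^ p ^ e * x) = r * ψ' x) ∧
          ∀ a : A, ψ' (algebraMap A R a) = algebraMap A R (ψ a)) :
    ∀ (I : Ideal A) (lam : ℝ), 0 ≤ lam →
      testIdeal A p I lam
        = (testIdeal R p (I.map (algebraMap A R)) lam).comap (algebraMap A R) := by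
  intro I lam _
  obtain ⟨β, hβ⟩ := hsplit
  refine le_antisymm (testIdeal_le_comap_of_cartierExtensible ?_ I lam) fun a ha => ?_
  · intro e ψ hψ
    obtain ⟨ψ', hadd, hmul, hψ'ψ⟩ := hCE e ψ hψ.1 hψ.2
    exact ⟨ψ', ⟨hadd, hmul⟩, hψ'ψ⟩
  · simpa only [hβ] using apply_mem_testIdeal β I lam ha

/-- **Proposition (test ideals of Cartier extensible direct summands).**
Let `A ⊆ R` be an extension of Noetherian rings of positive characteristic `p`, with
`R` a regular `F`-finite domain (regularity encoded, via Kunz's theorem, by flatness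
of the Frobenius) and `A` a strongly `F`-regular, Cartier extensible direct summand
of `R`.  Then for every ideal `I` of `A` and every real `λ ≥ 0`,
`τ_A(I^λ) = τ_R((IR)^λ) ∩ A`. -/
theorem testIdeal_cartierExtensible_summand
    {p : ℕ} (hp : p.Prime)
    {A R : Type*} [CommRing A] [CommRing R] [IsDomain A] [IsDomain R]
    [IsNoetherianRing A] [IsNoetherianRing R]
    [CharP A p] [CharP R p] [ExpChar R p]
    [Algebra A R] (hinj : Function.Injective (algebraMap A R))
    -- `R` is regular (Kunz: the Frobenius of `R` is flat)
    (hreg : (frobenius R p).Flat)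
    -- `R` is `F`-finite
    (hFF : ∀ e : ℕ, ∃ s : Finset R, ∀ t : R, ∃ c : R → R,
        t = ∑ x ∈ s, c x ^ p ^ e * x)
    -- `A` is strongly `F`-regular
    (hSFR : ∀ c : A, c ≠ 0 → ∃ (e : ℕ) (θ : A → A),
        (∀ a b : A, θ (a + b) = θ a + θ b) ∧
        (∀ r x : A, θ (r ^ p ^ e * x) = r * θ x) ∧ θ c = 1)
    -- `A` is a direct summand of `R`
    (hsplit : ∃ β : R →ₗ[A] A, ∀ a : A, β (algebraMap A R a) = a)
    -- the inclusion `A ⊆ R` is Cartier extensible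
    (hCE : ∀ (e : ℕ) (ψ : A → A),
        (∀ a b : A, ψ (a + b) = ψ a + ψ b) →
        (∀ r x : A, ψ (r ^ p ^ e * x) = r * ψ x) →
        ∃ ψ' : R → R, (∀ a b : R, ψ' (a + b) = ψ' a + ψ' b) ∧
          (∀ r x : R, ψ' (r ^ p ^ e * x) = r * ψ' x) ∧
          ∀ a : A, ψ' (algebraMap A R a) = algebraMap A R (ψ a)) :
    ∀ (I : Ideal A) (lam : ℝ), 0 ≤ lam →
      testIdeal A p I lam
        = (testIdeal R p (I.map (algebraMap A R)) lam).comap (algebraMap A R) :=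
  testIdeal_cartierExtensible_summand_general hsplit hCE
end
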